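/- arXiv:2504.06026 — 12 statements merged into one kernel-verified Lean document; each statement's English description precedes it below -/
import Mathlib

section
/- Suppose a run satisfies (R1): for every index j and every contribution (g,b) ∈ C_j with b ⋢ ρ_j g, there exists some d with (g,d) ∈ U_j; and (R2): for every index j and every origin o, if i ≤ j is the largest index with o_i = o, then for every (g,d) ∈ U_j such that (g,d_i) ∈ C_i, one has d_i ⊑ d. Then for every index j, every global g and every origin o the latest-contribution invariant holds: if i < j is an index with o_i = o and (g,d) ∈ C_i, and o_{i'} ≠ o for all i' with i < i' < j, then d ⊑ ρ_j g. -/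
/-- Let `D` be a bounded lattice, `G` globals, `O` origins.  A run consists of, for each index
`j`, an origin `o j`, a finite set `C j ⊆ G × D` of contributions (each global at most once),
a map `ρ j : G → D` and a finite set `U j ⊆ G × D` of updates (each global at most once),
subject to `ρ (j+1) = ρ j ⊕ U j`.  If the run satisfies (R1) and (R2), then for every index
`j`, every global `g` and every origin `oo` the latest-contribution invariant holds: if
`i < j` is an index with `o i = oo` and `(g, d) ∈ C i`, and `o i' ≠ oo` for all `i < i' < j`,
then `d ≤ ρ j g`. -/
theorem latest_contribution_invariant
    {D G O : Type*} [Lattice D] [BoundedOrder D]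
    (o : ℕ → O) (C : ℕ → Set (G × D)) (U : ℕ → Set (G × D)) (ρ : ℕ → G → D)
    -- the contribution and update sets are finite and mention each global at most once
    (hCfin : ∀ j, (C j).Finite)
    (hUfin : ∀ j, (U j).Finite)
    (hCuniq : ∀ j g d d', (g, d) ∈ C j → (g, d') ∈ C j → d = d')
    (hUuniq : ∀ j g d d', (g, d) ∈ U j → (g, d') ∈ U j → d = d')
    -- ρ_{j+1} = ρ_j ⊕ U_j
    (hρupd : ∀ j g d, (g, d) ∈ U j → ρ (j + 1) g = d)
    (hρsame : ∀ j g, (∀ d, (g, d) ∉ U j) → ρ (j + 1) g = ρ j g)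
    -- (R1)
    (hR1 : ∀ j g b, (g, b) ∈ C j → ¬ b ≤ ρ j g → ∃ d, (g, d) ∈ U j)
    -- (R2)
    (hR2 : ∀ j (oo : O) i, i ≤ j → o i = oo →
      (∀ i', i < i' → i' ≤ j → o i' ≠ oo) →
      ∀ g d dᵢ, (g, d) ∈ U j → (g, dᵢ) ∈ C i → dᵢ ≤ d) :
    -- latest-contribution invariant
    ∀ j g (oo : O) i d, i < j → o i = oo → (g, d) ∈ C i →
      (∀ i', i < i' → i' < j → o i' ≠ oo) → d ≤ ρ j g := by
  intro j
  induction j with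
  | zero => intro g oo i d h; omega
  | succ j ih =>
    intro g oo i d hij hoi hC hlatest
    rcases Nat.lt_succ_iff_lt_or_eq.mp hij with hij' | rfl
    · -- i < j : use IH for d ≤ ρ j g, then step
      have hstep : ∀ i', i < i' → i' ≤ j → o i' ≠ oo := by
        intro i' h1 h2; exact hlatest i' h1 (by omega)
      by_cases hu : ∃ d', (g, d') ∈ U j
      · obtain ⟨d', hd'⟩ := hu
        have := hR2 j oo i (le_of_lt hij') hoi hstep g d' d hd' hC
        rw [hρupd j g d' hd']; exact this
      · push_neg at hu
        rw [hρsame j g hu]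
        exact ih g oo i d hij' hoi hC (fun i' h1 h2 => hlatest i' h1 (by omega))
    · -- j = i : step from call i itself
      by_cases hu : ∃ d', (g, d') ∈ U i
      · obtain ⟨d', hd'⟩ := hu
        have hstep : ∀ i', i < i' → i' ≤ i → o i' ≠ oo := by
          intro i' h1 h2; omega
        have := hR2 i oo i le_rfl hoi hstep g d' d hd' hC
        rw [hρupd i g d' hd']; exact this
      · push_neg at hu
        rw [hρsame i g hu]
        by_contra hle
        obtain ⟨d', hd'⟩ := hR1 i g d hC hle
        exact hu d' hd'
end

section
/- Consider the always-join update rule: for every index j set U_j = { (g, ρ_j g ⊔ b) : (g,b) ∈ C_j and b ⋢ ρ_j g } and ρ_{j+1} = ρ_j ⊕ U_j. Then the resulting run satisfies (R1) (for every (g,b) ∈ C_j with b ⋢ ρ_j g there is a pair (g,d) ∈ U_j) and (R2) (for every origin o with largest index i ≤ j such that o_i = o, every (g,d) ∈ U_j and every (g,d_i) ∈ C_i one has d_i ⊑ d); moreover the stronger invariant holds that for all i ≤ j and all (g,d) ∈ C_i, d ⊑ ρ_{j+1} g. -/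
/-- The always-join update rule `U j = {(g, ρ j g ⊔ b) : (g, b) ∈ C j, b ⋢ ρ j g}` with
`ρ (j+1) = ρ j ⊕ U j` satisfies (R1) and (R2); moreover the stronger invariant holds that
for all `i ≤ j` and all `(g, d) ∈ C i`, `d ≤ ρ (j+1) g`. -/
theorem always_join_update_rule_sound
    {D G O : Type*} [Lattice D] [BoundedOrder D]
    (o : ℕ → O) (C : ℕ → Set (G × D)) (U : ℕ → Set (G × D)) (ρ : ℕ → G → D)
    -- the contribution sets are finite and mention each global at most once
    (hCfin : ∀ j, (C j).Finite)
    (hCuniq : ∀ j g d d', (g, d) ∈ C j → (g, d') ∈ C j → d = d')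
    -- the always-join update rule
    (hU : ∀ j g d, (g, d) ∈ U j ↔ ∃ b, (g, b) ∈ C j ∧ ¬ b ≤ ρ j g ∧ d = ρ j g ⊔ b)
    -- ρ_{j+1} = ρ_j ⊕ U_j
    (hρupd : ∀ j g d, (g, d) ∈ U j → ρ (j + 1) g = d)
    (hρsame : ∀ j g, (∀ d, (g, d) ∉ U j) → ρ (j + 1) g = ρ j g) :
    -- (R1)
    (∀ j g b, (g, b) ∈ C j → ¬ b ≤ ρ j g → ∃ d, (g, d) ∈ U j) ∧
    -- (R2)
    (∀ j (oo : O) i, i ≤ j → o i = oo →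
      (∀ i', i < i' → i' ≤ j → o i' ≠ oo) →
      ∀ g d dᵢ, (g, d) ∈ U j → (g, dᵢ) ∈ C i → dᵢ ≤ d) ∧
    -- the stronger invariant: every past contribution is subsumed
    (∀ j i g d, i ≤ j → (g, d) ∈ C i → d ≤ ρ (j + 1) g) := by
  -- ρ is monotone in the step index
  have hstep : ∀ j g, ρ j g ≤ ρ (j + 1) g := by
    intro j g
    by_cases h : ∃ d, (g, d) ∈ U j
    · obtain ⟨d, hd⟩ := h
      rw [hρupd j g d hd]
      obtain ⟨b, _, _, rfl⟩ := (hU j g d).mp hd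
      exact le_sup_left
    · push_neg at h
      rw [hρsame j g h]
  have hmono : ∀ i j, i ≤ j → ∀ g, ρ i g ≤ ρ j g := by
    intro i j hij g
    induction j with
    | zero => simp_all
    | succ j ih =>
      rcases Nat.lt_or_ge i (j + 1) with h | h
      · exact (ih (Nat.lt_succ_iff.mp h)).trans (hstep j g)
      · have : i = j + 1 := le_antisymm hij h
        subst this; rfl
  -- stronger invariant
  have hinv : ∀ j i g d, i ≤ j → (g, d) ∈ C i → d ≤ ρ (j + 1) g := by
    intro j i g d hij hC
    have hbase : d ≤ ρ (i + 1) g := by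
      by_cases hd : d ≤ ρ i g
      · exact hd.trans (hstep i g)
      · have hmem : (g, ρ i g ⊔ d) ∈ U i := (hU i g _).mpr ⟨d, hC, hd, rfl⟩
        rw [hρupd i g _ hmem]; exact le_sup_right
    exact hbase.trans (hmono (i + 1) (j + 1) (by omega) g)
  refine ⟨?_, ?_, hinv⟩
  · intro j g b hC hnb
    exact ⟨ρ j g ⊔ b, (hU j g _).mpr ⟨b, hC, hnb, rfl⟩⟩
  · intro j oo i hij _ _ g d dᵢ hUmem hCi
    obtain ⟨b, hbC, _, rfl⟩ := (hU j g d).mp hUmem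
    rcases eq_or_lt_of_le hij with rfl | hlt
    · have : dᵢ = b := hCuniq i g dᵢ b hCi hbC
      subst this; exact le_sup_right
    · have : dᵢ ≤ ρ ((i) + 1) g := hinv i i g dᵢ le_rfl hCi
      exact (this.trans (hmono (i + 1) j hlt g)).trans le_sup_left
end

section
/- Consider the latest-contribution update rule: maintain maps cmap_j : G → O → D with cmap_0 g o = ⊥ for all g, o; at call j, for each (g,b) ∈ C_j set cmap_{j+1} g o_j = b (all other entries unchanged), and set U_j = { (g,d) : (g,b) ∈ C_j, where d is the join of the finitely many non-⊥ values cmap_{j+1} g o over o ∈ O, and d ≠ ρ_j g }, with ρ_{j+1} = ρ_j ⊕ U_j. Then the resulting run satisfies (R1) (for every (g,b) ∈ C_j with b ⋢ ρ_j g there is a pair (g,d) ∈ U_j) and (R2) (for every origin o with largest index i ≤ j such that o_i = o, every (g,d) ∈ U_j and every (g,d_i) ∈ C_i one has d_i ⊑ d); moreover, for every j, every global g and every origin o, the latest contribution d of o to g among calls with index i ≤ j satisfies d ⊑ ρ_{j+1} g. -/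
/-- The latest-contribution update rule: maintain `cmap j : G → O → D` with `cmap 0 g oo = ⊥`;
at call `j`, for each `(g, b) ∈ C j` set `cmap (j+1) g (o j) = b` (other entries unchanged),
and `U j` consists of the pairs `(g, d)` for `(g, b) ∈ C j` where `d` is the join (least
upper bound) of the finitely many non-`⊥` values `cmap (j+1) g oo` and `d ≠ ρ j g`;
`ρ (j+1) = ρ j ⊕ U j`.  Then the run satisfies (R1) and (R2), and moreover for every `j`,
global `g` and origin `oo`, the latest contribution `d` of `oo` to `g` among calls with
index `i ≤ j` satisfies `d ≤ ρ (j+1) g`. -/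
theorem latest_contribution_update_rule_sound
    {D G O : Type*} [Lattice D] [BoundedOrder D]
    (o : ℕ → O) (C : ℕ → Set (G × D)) (U : ℕ → Set (G × D)) (ρ : ℕ → G → D)
    (cmap : ℕ → G → O → D)
    -- the contribution sets are finite and mention each global at most once
    (hCfin : ∀ j, (C j).Finite)
    (hCuniq : ∀ j g d d', (g, d) ∈ C j → (g, d') ∈ C j → d = d')
    -- cmap records the latest contribution per origin
    (hcmap0 : ∀ g oo, cmap 0 g oo = ⊥)
    (hfin : ∀ j g, {oo | cmap j g oo ≠ ⊥}.Finite)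
    (hset : ∀ j g b, (g, b) ∈ C j → cmap (j + 1) g (o j) = b)
    (hother : ∀ j g oo, oo ≠ o j → cmap (j + 1) g oo = cmap j g oo)
    (hnone : ∀ j g, (∀ b, (g, b) ∉ C j) → cmap (j + 1) g (o j) = cmap j g (o j))
    -- the update rule: join of the recorded contributions, emitted if changed
    (hU : ∀ j g d, (g, d) ∈ U j ↔
      (∃ b, (g, b) ∈ C j) ∧ IsLUB (Set.range fun oo => cmap (j + 1) g oo) d ∧ d ≠ ρ j g)
    -- ρ_{j+1} = ρ_j ⊕ U_j
    (hρupd : ∀ j g d, (g, d) ∈ U j → ρ (j + 1) g = d)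
    (hρsame : ∀ j g, (∀ d, (g, d) ∉ U j) → ρ (j + 1) g = ρ j g) :
    -- (R1)
    (∀ j g b, (g, b) ∈ C j → ¬ b ≤ ρ j g → ∃ d, (g, d) ∈ U j) ∧
    -- (R2)
    (∀ j (oo : O) i, i ≤ j → o i = oo →
      (∀ i', i < i' → i' ≤ j → o i' ≠ oo) →
      ∀ g d dᵢ, (g, d) ∈ U j → (g, dᵢ) ∈ C i → dᵢ ≤ d) ∧
    -- the latest contribution of each origin is subsumed
    (∀ j g (oo : O) i d, i ≤ j → o i = oo → (g, d) ∈ C i →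
      (∀ i', i < i' → i' ≤ j → o i' ≠ oo) → d ≤ ρ (j + 1) g) := by

  -- the range of `cmap (j+1) g` always has a least upper bound
  have lubex : ∀ j g, ∃ d, IsLUB (Set.range fun oo => cmap (j + 1) g oo) d := by
    intro j g
    refine ⟨(hfin (j + 1) g).toFinset.sup (fun oo => cmap (j + 1) g oo), ?_, ?_⟩
    · rintro x ⟨oo, rfl⟩
      by_cases h : cmap (j + 1) g oo = ⊥
      · simp [h]
      · exact Finset.le_sup (by simpa using h)
    · intro u hu
      exact Finset.sup_le fun oo _ => hu ⟨oo, rfl⟩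
  -- if there is a contribution to `g` at call `j`, then `ρ (j+1) g` equals the LUB
  have hρeq : ∀ j g d, (∃ b, (g, b) ∈ C j) →
      IsLUB (Set.range fun oo => cmap (j + 1) g oo) d → ρ (j + 1) g = d := by
    intro j g d hb hd
    by_cases h : d = ρ j g
    · rw [hρsame j g, ← h]
      intro d' hd'
      obtain ⟨_, hlub', hne'⟩ := (hU j g d').1 hd'
      exact hne' ((hlub'.unique hd).trans h)
    · exact hρupd j g d ((hU j g d).2 ⟨hb, hd, h⟩)
  -- invariant: cmap j g oo ≤ ρ j g
  have hle : ∀ j g oo, cmap j g oo ≤ ρ j g := by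
    intro j
    induction j with
    | zero => intro g oo; simp [hcmap0]
    | succ k ih =>
      intro g oo
      by_cases hc : ∃ b, (g, b) ∈ C k
      · obtain ⟨d, hd⟩ := lubex k g
        rw [hρeq k g d hc hd]
        exact hd.1 ⟨oo, rfl⟩
      · push_neg at hc
        have h1 : cmap (k + 1) g oo = cmap k g oo := by
          by_cases h : oo = o k
          · subst h; exact hnone k g hc
          · exact hother k g oo h
        have h2 : ρ (k + 1) g = ρ k g := by
          refine hρsame k g fun d hd => ?_
          obtain ⟨⟨b, hb⟩, _, _⟩ := (hU k g d).1 hd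
          exact hc b hb
        rw [h1, h2]; exact ih g oo
  -- if origin `oo` makes no call in (i, j], its cmap entry is unchanged
  have hstay : ∀ (oo : O) g j i, i ≤ j → (∀ i', i < i' → i' ≤ j → o i' ≠ oo) →
      cmap (j + 1) g oo = cmap (i + 1) g oo := by
    intro oo g j
    induction j with
    | zero => intro i hi _; interval_cases i; rfl
    | succ k ih =>
      intro i hi hno
      rcases Nat.lt_or_ge i (k + 1) with h | h
      · have hne : oo ≠ o (k + 1) :=
          fun he => hno (k + 1) h le_rfl he.symm
        rw [hother (k + 1) g oo hne]
        exact ih i (Nat.lt_succ_iff.mp h) fun i' h1 h2 => hno i' h1 (h2.trans (Nat.le_succ k))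
      · have : i = k + 1 := le_antisymm hi h
        subst this; rfl
  -- the latest contribution of `oo` to `g` is recorded in cmap
  have hrec : ∀ (oo : O) g j i d, i ≤ j → o i = oo → (g, d) ∈ C i →
      (∀ i', i < i' → i' ≤ j → o i' ≠ oo) → cmap (j + 1) g oo = d := by
    intro oo g j i d hij hoi hC hno
    rw [hstay oo g j i hij hno, ← hoi]
    exact hset i g d hC
  refine ⟨?_, ?_, ?_⟩
  · -- R1
    intro j g b hb hnle
    obtain ⟨d, hd⟩ := lubex j g
    have hbd : b ≤ d := by
      have := hset j g b hb
      exact this ▸ hd.1 ⟨o j, rfl⟩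
    have hne : d ≠ ρ j g := fun h => hnle (h ▸ hbd)
    exact ⟨d, (hU j g d).2 ⟨⟨b, hb⟩, hd, hne⟩⟩
  · -- R2
    intro j oo i hij hoi hno g d dᵢ hdU hCi
    obtain ⟨_, hlub, _⟩ := (hU j g d).1 hdU
    have := hrec oo g j i dᵢ hij hoi hCi hno
    exact this ▸ hlub.1 ⟨oo, rfl⟩
  · -- latest contribution subsumed
    intro j g oo i d hij hoi hCi hno
    have h := hrec oo g j i d hij hoi hCi hno
    exact h ▸ hle (j + 1) g oo
end

section
/- Every strong widening operator ∇ on a bounded lattice D is a widening operator: for all a, b ∈ D one has a ⊔ b ⊑ a ∇ b, and for every a₀ ∈ D and every sequence (bᵢ)_{i≥1} in D, the sequence defined by aᵢ = a_{i−1} ∇ bᵢ is ultimately stable. -/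
/-- A sequence is ultimately stable. -/
def UltimatelyStable {D : Type*} (a : ℕ → D) : Prop :=
  ∃ i₀, ∀ i, i₀ ≤ i → a i = a i₀

/-- `W` is a widening operator: it subsumes the join, and every widening sequence
`aᵢ = a_{i-1} ∇ bᵢ` is ultimately stable. -/
def IsWidening {D : Type*} [Lattice D] (W : D → D → D) : Prop :=
  (∀ a b, a ⊔ b ≤ W a b) ∧
  ∀ (a b : ℕ → D), (∀ i, a (i + 1) = W (a i) (b (i + 1))) → UltimatelyStable a

/-- `W` is a strong widening operator: (i) it subsumes the join, (ii) `a ∇ b = a` whenever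
`b ≤ a`, and (iii) for every increasing sequence `a₁ ≤ a₂ ≤ …` and every sequence `bᵢ`
with `aᵢ ∇ bᵢ ≤ a_{i+1}` for all `i ≥ 1`, eventually `bᵢ ≤ aᵢ`. -/
def IsStrongWidening {D : Type*} [Lattice D] (W : D → D → D) : Prop :=
  (∀ a b, a ⊔ b ≤ W a b) ∧
  (∀ a b, b ≤ a → W a b = a) ∧
  ∀ (a b : ℕ → D), (∀ i, 1 ≤ i → a i ≤ a (i + 1)) →
    (∀ i, 1 ≤ i → W (a i) (b i) ≤ a (i + 1)) →
    ∃ i₀, 1 ≤ i₀ ∧ ∀ i, i₀ ≤ i → b i ≤ a i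

/-- Every strong widening operator on a bounded lattice is a widening
operator. -/
theorem strong_widening_is_widening {D : Type*} [Lattice D] [BoundedOrder D]
    (W : D → D → D) (h : IsStrongWidening W) : IsWidening W := by
  obtain ⟨hjoin, hstab, hseq⟩ := h
  refine ⟨hjoin, fun a b hab => ?_⟩
  -- shifted sequence a' i = a (i-1)
  have hmono : ∀ i, 1 ≤ i → a (i - 1) ≤ a (i + 1 - 1) := by
    intro i hi
    obtain ⟨j, rfl⟩ := Nat.exists_eq_add_of_le hi
    simp only [Nat.add_sub_cancel_left, Nat.add_comm 1 j]
    calc a j ≤ a j ⊔ b (j + 1) := le_sup_left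
      _ ≤ W (a j) (b (j + 1)) := hjoin _ _
      _ = a (j + 1) := (hab j).symm
  have hw : ∀ i, 1 ≤ i → W (a (i - 1)) (b i) ≤ a (i + 1 - 1) := by
    intro i hi
    obtain ⟨j, rfl⟩ := Nat.exists_eq_add_of_le hi
    simp only [Nat.add_sub_cancel_left, Nat.add_comm 1 j]
    exact le_of_eq (hab j).symm
  obtain ⟨i₀, hi₀, hb⟩ := hseq (fun i => a (i - 1)) b hmono hw
  refine ⟨i₀, fun i hi => ?_⟩
  induction i with
  | zero => rw [Nat.le_zero.mp hi]
  | succ n ih =>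
    rcases Nat.lt_or_ge i₀ (n + 1) with hlt | hge
    · have hn : i₀ ≤ n := Nat.lt_succ_iff.mp hlt
      have hbn : b (n + 1) ≤ a ((n + 1) - 1) := hb (n + 1) (Nat.le_succ_of_le hn)
      simp only [Nat.add_sub_cancel] at hbn
      rw [hab n, hstab _ _ hbn]
      exact ih hn
    · have : i₀ = n + 1 := le_antisymm hi hge
      rw [this]
end

section
/- Let D₁ and D₂ be bounded lattices and let ∇₁ and ∇₂ be strong widening operators on D₁ and D₂ respectively. Then the componentwise operator ∇ on the cartesian product D₁ × D₂ with the componentwise order, defined by (a₁,a₂) ∇ (b₁,b₂) = (a₁ ∇₁ b₁, a₂ ∇₂ b₂), is a strong widening operator on D₁ × D₂. -/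
/-- The componentwise combination of strong widening operators is a strong
widening operator on the cartesian product (with the componentwise order). -/
theorem prod_strong_widening {D₁ D₂ : Type*}
    [Lattice D₁] [BoundedOrder D₁] [Lattice D₂] [BoundedOrder D₂]
    (W₁ : D₁ → D₁ → D₁) (W₂ : D₂ → D₂ → D₂)
    (h₁ : IsStrongWidening W₁) (h₂ : IsStrongWidening W₂) :
    IsStrongWidening (fun a b : D₁ × D₂ => (W₁ a.1 b.1, W₂ a.2 b.2)) := by
  obtain ⟨j1, e1, c1⟩ := h₁
  obtain ⟨j2, e2, c2⟩ := h₂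
  refine ⟨fun a b => ⟨?_, ?_⟩, fun a b hba => ?_, fun a b ha hw => ?_⟩
  · exact le_trans (by exact sup_le (le_sup_left) (le_sup_right)) (j1 a.1 b.1)
  · exact le_trans (by exact sup_le (le_sup_left) (le_sup_right)) (j2 a.2 b.2)
  · exact Prod.ext (e1 a.1 b.1 hba.1) (e2 a.2 b.2 hba.2)
  · obtain ⟨i₁, hi₁, hb₁⟩ := c1 (fun i => (a i).1) (fun i => (b i).1)
      (fun i hi => (ha i hi).1) (fun i hi => (hw i hi).1)
    obtain ⟨i₂, hi₂, hb₂⟩ := c2 (fun i => (a i).2) (fun i => (b i).2)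
      (fun i hi => (ha i hi).2) (fun i hi => (hw i hi).2)
    exact ⟨max i₁ i₂, le_trans hi₁ (le_max_left _ _),
      fun i hi => ⟨hb₁ i (le_trans (le_max_left _ _) hi),
        hb₂ i (le_trans (le_max_right _ _) hi)⟩⟩
end

section
/- Let D₁ and D₂ be bounded lattices such that D₁ contains an infinite strictly ascending chain d₁ ⊏₁ d₂ ⊏₁ … and the bottom and top of D₂ are distinct. Let ∇ be the componentwise combination of operators ∇₁, ∇₂ on the cartesian product D₁ × D₂ equipped with the lexicographic order, where ∇₁ and ∇₂ satisfy aᵢ ∇ᵢ bᵢ = aᵢ whenever bᵢ ⊑ᵢ aᵢ (for i = 1, 2). Then ∇ is not a strong widening operator: the sequences ā_i = (d_{i+1}, ⊥₂) for i ≥ 1 (increasing in the lexicographic order) and b̄_i = (d_i, ⊤₂) satisfy ā_{i} ⊒ ā_{i-1} ∇ b̄_i for all i ≥ 1 (with ā₀ = (d₁, ⊥₂)), yet b̄_i ⋢ ā_i for every i, violating condition (iii) of strong widenings. -/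
/-- Let `D₁` have an infinite strictly ascending chain `d₁ < d₂ < …` and let `⊥ ≠ ⊤` in `D₂`.
Let `∇` be the componentwise combination of `∇₁, ∇₂` on `D₁ × D₂` with the lexicographic
order, where `∇ᵢ a b = a` whenever `b ≤ a`.  Then the sequences `āᵢ = (d_{i+1}, ⊥)` and
`b̄ᵢ = (dᵢ, ⊤)` satisfy `ā_{i-1} ∇ b̄ᵢ ⊑ āᵢ` for all `i ≥ 1` (with `ā₀ = (d₁, ⊥)`), yet
`b̄ᵢ` is not subsumed by the left widening operand `ā_{i-1}` for any `i ≥ 1`; hence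
condition (iii) of strong widenings fails, i.e. `∇` is not a strong widening operator. -/
theorem lex_componentwise_not_strong_widening
    {D₁ D₂ : Type*} [Lattice D₁] [BoundedOrder D₁] [Lattice D₂] [BoundedOrder D₂]
    (hD₂ : (⊥ : D₂) ≠ ⊤)
    (d : ℕ → D₁) (hd : ∀ i, d i < d (i + 1))
    (W₁ : D₁ → D₁ → D₁) (W₂ : D₂ → D₂ → D₂)
    (hW₁ : ∀ a b, b ≤ a → W₁ a b = a) (hW₂ : ∀ a b, b ≤ a → W₂ a b = a) :
    -- the lexicographic order on D₁ × D₂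
    let lexLE : D₁ × D₂ → D₁ × D₂ → Prop :=
      fun p q => p.1 < q.1 ∨ (p.1 = q.1 ∧ p.2 ≤ q.2)
    -- the componentwise operator
    let W : D₁ × D₂ → D₁ × D₂ → D₁ × D₂ := fun p q => (W₁ p.1 q.1, W₂ p.2 q.2)
    -- the witnessing sequences (āᵢ indexed so that ā₀ = (d₁, ⊥))
    let abar : ℕ → D₁ × D₂ := fun i => (d (i + 1), ⊥)
    let bbar : ℕ → D₁ × D₂ := fun i => (d i, ⊤)
    -- ā is strictly ascending (in particular increasing)
    (∀ i, lexLE (abar i) (abar (i + 1)) ∧ abar i ≠ abar (i + 1)) ∧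
    -- ā_{i-1} ∇ b̄ᵢ ⊑ āᵢ for all i ≥ 1
    (∀ i, 1 ≤ i → lexLE (W (abar (i - 1)) (bbar i)) (abar i)) ∧
    -- yet b̄ᵢ is never subsumed by the left widening operand ā_{i-1}
    (∀ i, 1 ≤ i → ¬ lexLE (bbar i) (abar (i - 1))) ∧
    -- hence condition (iii) of strong widenings fails for W w.r.t. the lexicographic order
    ¬ (∀ (A B : ℕ → D₁ × D₂), (∀ i, 1 ≤ i → lexLE (A i) (A (i + 1))) →
        (∀ i, 1 ≤ i → lexLE (W (A i) (B i)) (A (i + 1))) →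
        ∃ i₀, 1 ≤ i₀ ∧ ∀ i, i₀ ≤ i → lexLE (B i) (A i)) := by
  intro lexLE W abar bbar
  have key : ∀ i, ¬ lexLE (bbar (i + 1)) (abar i) := by
    intro i h
    rcases h with h | ⟨h1, h2⟩
    · exact lt_irrefl _ h
    · exact hD₂ (le_antisymm bot_le h2)
  refine ⟨fun i => ⟨Or.inl (hd (i + 1)), fun h => (hd (i + 1)).ne (congrArg Prod.fst h)⟩,
    ?_, ?_, ?_⟩
  · intro i hi
    have hi' : i - 1 + 1 = i := Nat.succ_pred_eq_of_pos hi
    left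
    show W₁ (d (i - 1 + 1)) (d i) < d (i + 1)
    rw [hi', hW₁ _ _ le_rfl]
    exact hd i
  · intro i hi
    have hi' : i - 1 + 1 = i := Nat.succ_pred_eq_of_pos hi
    have := key (i - 1)
    rwa [hi'] at this
  · intro hc
    obtain ⟨i₀, hi₀, hall⟩ := hc abar (fun i => bbar (i + 1))
      (fun i _ => Or.inl (hd (i + 1)))
      (fun i _ => by
        left
        show W₁ (d (i + 1)) (d (i + 1)) < d (i + 1 + 1)
        rw [hW₁ _ _ le_rfl]
        exact hd (i + 1))
    exact key i₀ (hall i₀ le_rfl)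
end

section
/- The classic interval narrowing △ on the interval domain over ℤ is a narrowing operator: a ⊓ b ⊑ a △ b ⊑ a for all intervals a, b, and for every a₀ and every sequence (bᵢ)_{i≥1} of intervals, the sequence defined by aᵢ = a_{i−1} △ bᵢ is ultimately stable. -/
/-- Extended integers `ℤ ∪ {−∞, +∞}`: lower bounds live in `ℤ ∪ {−∞}` (i.e. are `≠ ⊤`),
upper bounds live in `ℤ ∪ {+∞}` (i.e. are `≠ ⊥`). -/
abbrev IntvEInt : Type := WithBot (WithTop ℤ)

/-- A non-empty interval `[lo, hi]` with `lo ∈ ℤ ∪ {−∞}`, `hi ∈ ℤ ∪ {+∞}` and `lo ≤ hi`. -/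
structure NEIntv : Type where
  lo : IntvEInt
  hi : IntvEInt
  lo_le_hi : lo ≤ hi
  lo_ne_top : lo ≠ (⊤ : IntvEInt)
  hi_ne_bot : hi ≠ (⊥ : IntvEInt)

/-- The interval domain over `ℤ`: `⊥` together with all non-empty intervals. -/
inductive Intv : Type where
  | bot : Intv
  | iv : NEIntv → Intv

namespace Intv

/-- Interval inclusion order. -/
def le : Intv → Intv → Prop
  | .bot, _ => True
  | .iv _, .bot => False
  | .iv a, .iv b => b.lo ≤ a.lo ∧ a.hi ≤ b.hi

/-- Join: the interval hull. -/
def sup : Intv → Intv → Intv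
  | .bot, x => x
  | .iv a, .bot => .iv a
  | .iv a, .iv b =>
    .iv { lo := min a.lo b.lo
          hi := max a.hi b.hi
          lo_le_hi := le_trans (min_le_left _ _) (le_trans a.lo_le_hi (le_max_left _ _))
          lo_ne_top := by
            intro h
            rcases min_choice a.lo b.lo with h' | h'
            · exact a.lo_ne_top (h'.symm.trans h)
            · exact b.lo_ne_top (h'.symm.trans h)
          hi_ne_bot := by
            intro h
            rcases max_choice a.hi b.hi with h' | h'
            · exact a.hi_ne_bot (h'.symm.trans h)
            · exact b.hi_ne_bot (h'.symm.trans h) }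

/-- Meet: intersection, the empty intersection being represented by `⊥`. -/
noncomputable def inf : Intv → Intv → Intv
  | .bot, _ => .bot
  | .iv _, .bot => .bot
  | .iv a, .iv b =>
    if h : max a.lo b.lo ≤ min a.hi b.hi then
      .iv { lo := max a.lo b.lo
            hi := min a.hi b.hi
            lo_le_hi := h
            lo_ne_top := by
              intro hh
              rcases max_choice a.lo b.lo with h' | h'
              · exact a.lo_ne_top (h'.symm.trans hh)
              · exact b.lo_ne_top (h'.symm.trans hh)
            hi_ne_bot := by
              intro hh
              rcases min_choice a.hi b.hi with h' | h'
              · exact a.hi_ne_bot (h'.symm.trans hh)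
              · exact b.hi_ne_bot (h'.symm.trans hh) }
    else .bot

/-- The classic interval widening:
`⊥ ∇ x = x`, `x ∇ ⊥ = x`, and
`[l_a,u_a] ∇ [l_b,u_b] = [(if l_a ≤ l_b then l_a else −∞), (if u_a ≥ u_b then u_a else +∞)]`. -/
noncomputable def widen : Intv → Intv → Intv
  | .bot, x => x
  | .iv a, .bot => .iv a
  | .iv a, .iv b =>
    .iv { lo := if a.lo ≤ b.lo then a.lo else (⊥ : IntvEInt)
          hi := if b.hi ≤ a.hi then a.hi else (⊤ : IntvEInt)
          lo_le_hi := by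
            split <;> split <;>
              first
                | exact a.lo_le_hi
                | exact le_top
                | exact bot_le
          lo_ne_top := by
            split
            · exact a.lo_ne_top
            · exact bot_ne_top
          hi_ne_bot := by
            split
            · exact a.hi_ne_bot
            · exact top_ne_bot }

/-- The classic interval narrowing:
`x △ ⊥ = ⊥`, `⊥ △ x = ⊥`, and
`[l_a,u_a] △ [l_b,u_b] = [(if l_a ≠ −∞ then l_a else l_b), (if u_a ≠ +∞ then u_a else u_b)]`
(an empty result being represented by `⊥`). -/
noncomputable def narrow : Intv → Intv → Intv
  | _, .bot => .bot
  | .bot, _ => .bot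
  | .iv a, .iv b =>
    if h : (if a.lo = (⊥ : IntvEInt) then b.lo else a.lo) ≤
           (if a.hi = (⊤ : IntvEInt) then b.hi else a.hi) then
      .iv { lo := if a.lo = (⊥ : IntvEInt) then b.lo else a.lo
            hi := if a.hi = (⊤ : IntvEInt) then b.hi else a.hi
            lo_le_hi := h
            lo_ne_top := by
              split
              · exact b.lo_ne_top
              · exact a.lo_ne_top
            hi_ne_bot := by
              split
              · exact b.hi_ne_bot
              · exact a.hi_ne_bot }
    else .bot

end Intv

/-!
Narrowing only ever replaces an infinite endpoint of `a` by the corresponding endpoint of `b`,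
or drops to `⊥`. So along a narrowing sequence every step either leaves the interval unchanged
or strictly lowers the number of infinite endpoints (with `⊥` counted lowest), and a sequence
whose steps are all of this kind must stabilise.
-/

theorem NEIntv.ext {a b : NEIntv} (hlo : a.lo = b.lo) (hhi : a.hi = b.hi) : a = b := by
  cases a; cases b; congr

section EndpointRefinement

variable {α : Type*} [DecidableEq α]

theorem le_ite_eq_bot [Preorder α] [OrderBot α] (x y : α) : x ≤ if x = ⊥ then y else x := by
  split_ifs with hx
  · exact hx ▸ bot_le
  · exact le_rfl

theorem ite_eq_top_le [Preorder α] [OrderTop α] (x y : α) : (if x = ⊤ then y else x) ≤ x :=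
  le_ite_eq_bot (α := αᵒᵈ) x y

theorem ite_eq_bot_le_max [LinearOrder α] [Bot α] (x y : α) :
    (if x = ⊥ then y else x) ≤ max x y := by
  split_ifs
  · exact le_max_right x y
  · exact le_max_left x y

theorem min_le_ite_eq_top [LinearOrder α] [Top α] (x y : α) :
    min x y ≤ if x = ⊤ then y else x :=
  ite_eq_bot_le_max (α := αᵒᵈ) x y

theorem ite_eq_bot_eq_or [Bot α] (x y : α) :
    (if x = ⊥ then y else x) = x ∨ (x = ⊥ ∧ (if x = ⊥ then y else x) ≠ ⊥) := by
  by_cases hx : x = ⊥ <;> by_cases hy : y = ⊥ <;> simp [hx, hy]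

theorem ite_eq_top_eq_or [Top α] (x y : α) :
    (if x = ⊤ then y else x) = x ∨ (x = ⊤ ∧ (if x = ⊤ then y else x) ≠ ⊤) :=
  ite_eq_bot_eq_or (α := αᵒᵈ) x y

end EndpointRefinement

theorem exists_forall_ge_eq_of_eq_or_lt {α β : Type*} [LT β] [WellFoundedLT β]
    (f : ℕ → α) (μ : α → β) (hstep : ∀ i, f (i + 1) = f i ∨ μ (f (i + 1)) < μ (f i)) :
    ∃ i₀, ∀ i, i₀ ≤ i → f i = f i₀ := by
  refine ⟨Function.argmin (μ ∘ f), fun i hi => ?_⟩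
  induction i, hi using Nat.le_induction with
  | base => rfl
  | succ i _ ih =>
    rcases hstep i with heq | hlt
    · rw [heq, ih]
    · rw [ih] at hlt
      exact absurd hlt (Function.not_lt_argmin (μ ∘ f) (i + 1))

namespace Intv

theorem narrow_iv_iv_cases (a b : NEIntv) :
    (¬(if a.lo = ⊥ then b.lo else a.lo) ≤ (if a.hi = ⊤ then b.hi else a.hi) ∧
        narrow (iv a) (iv b) = bot) ∨
      ∃ c : NEIntv, narrow (iv a) (iv b) = iv c ∧
        c.lo = (if a.lo = ⊥ then b.lo else a.lo) ∧ c.hi = (if a.hi = ⊤ then b.hi else a.hi) := by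
  by_cases h : (if a.lo = ⊥ then b.lo else a.lo) ≤ (if a.hi = ⊤ then b.hi else a.hi)
  · exact Or.inr ⟨_, by rw [narrow, dif_pos h], rfl, rfl⟩
  · exact Or.inl ⟨h, by rw [narrow, dif_neg h]⟩

theorem narrow_le_left (x y : Intv) : (narrow x y).le x := by
  match x, y with
  | x, .bot => cases x <;> trivial
  | .bot, .iv _ => trivial
  | .iv a, .iv b =>
    obtain ⟨-, hbot⟩ | ⟨c, hc, hlo, hhi⟩ := narrow_iv_iv_cases a b
    · rw [hbot]; trivial
    · rw [hc]
      exact ⟨hlo ▸ le_ite_eq_bot a.lo b.lo, hhi ▸ ite_eq_top_le a.hi b.hi⟩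

theorem inf_le_narrow (x y : Intv) : (inf x y).le (narrow x y) := by
  match x, y with
  | .bot, _ => trivial
  | .iv _, .bot => trivial
  | .iv a, .iv b =>
    have hlo := ite_eq_bot_le_max a.lo b.lo
    have hhi := min_le_ite_eq_top a.hi b.hi
    obtain ⟨hempty, hbot⟩ | ⟨c, hc, hclo, hchi⟩ := narrow_iv_iv_cases a b
    · have hmeet : ¬max a.lo b.lo ≤ min a.hi b.hi := fun h => hempty (hlo.trans (h.trans hhi))
      simp only [inf, dif_neg hmeet]
      trivial
    · rw [hc]
      simp only [inf]
      split
      · exact ⟨hclo ▸ hlo, hchi ▸ hhi⟩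
      · trivial

def weight : Intv → ℕ
  | .bot => 0
  | .iv a => 1 + (if a.lo = ⊥ then 1 else 0) + (if a.hi = ⊤ then 1 else 0)

theorem narrow_eq_or_weight_lt (x y : Intv) : narrow x y = x ∨ (narrow x y).weight < x.weight := by
  match x, y with
  | .bot, y => left; cases y <;> rfl
  | .iv a, .bot => right; simp [narrow, weight]
  | .iv a, .iv b =>
    obtain ⟨-, hbot⟩ | ⟨c, hc, hclo, hchi⟩ := narrow_iv_iv_cases a b
    · right; simp [hbot, weight]
    · have hlo := hclo ▸ ite_eq_bot_eq_or a.lo b.lo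
      have hhi := hchi ▸ ite_eq_top_eq_or a.hi b.hi
      rw [hc]
      rcases hlo with hlo | ⟨ha, hlo⟩ <;> rcases hhi with hhi | ⟨hb, hhi⟩
      · exact Or.inl (congrArg iv (NEIntv.ext hlo hhi))
      · exact Or.inr (by simp [weight, hlo, hb, hhi])
      · exact Or.inr (by simp [weight, ha, hlo, hhi])
      · exact Or.inr (by simp [weight, ha, hb, hlo, hhi])

end Intv

/-- The classic interval narrowing is a narrowing operator:
`a ⊓ b ⊑ a △ b ⊑ a` for all intervals, and every narrowing sequence
`aᵢ = a_{i-1} △ bᵢ` is ultimately stable. -/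
theorem interval_narrow_is_narrowing :
    (∀ a b : Intv, (Intv.inf a b).le (Intv.narrow a b) ∧ (Intv.narrow a b).le a) ∧
    (∀ (a b : ℕ → Intv), (∀ i, a (i + 1) = Intv.narrow (a i) (b (i + 1))) →
      ∃ i₀, ∀ i, i₀ ≤ i → a i = a i₀) :=
  ⟨fun a b => ⟨Intv.inf_le_narrow a b, Intv.narrow_le_left a b⟩,
    fun a b hstep => exists_forall_ge_eq_of_eq_or_lt a Intv.weight fun i =>
      hstep i ▸ Intv.narrow_eq_or_weight_lt (a i) (b (i + 1))⟩
end

section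
/- The classic interval widening ∇ on the interval domain over ℤ is a strong widening operator: a ⊔ b ⊑ a ∇ b for all intervals a, b; a ∇ b = a whenever b ⊑ a; and for every increasing sequence a₁ ⊑ a₂ ⊑ … of intervals and every sequence (bᵢ)_{i≥1} of intervals with aᵢ ∇ bᵢ ⊑ a_{i+1} for all i ≥ 1, there exists i₀ ≥ 1 with bᵢ ⊑ aᵢ for all i ≥ i₀. -/
/-!
Rank an abstract value by how many of its bounds are finite, with `⊥` ranked above every
interval. An inclusion can only lower the rank, and a widening step `a ∇ b` with `b ⋢ a` lowers it
strictly: either `a = ⊥`, or a finite bound of `a` is pushed to `±∞`. Along an increasing chain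
with `aᵢ ∇ bᵢ ⊑ aᵢ₊₁` the rank of `aᵢ` is therefore an antitone sequence of naturals, which is
eventually constant, and from then on `bᵢ ⊑ aᵢ`.
-/

namespace Intv

def rank : Intv → ℕ
  | .bot => 3
  | .iv x => (if x.lo = ⊥ then 0 else 1) + (if x.hi = ⊤ then 0 else 1)

theorem le.rank_le {a b : Intv} (h : a.le b) : b.rank ≤ a.rank := by
  match a, b, h with
  | .bot, .bot, _ => exact le_rfl
  | .bot, .iv y, _ => simp only [rank]; split_ifs <;> omega
  | .iv x, .iv y, ⟨hlo, hhi⟩ =>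
    have hlo' : x.lo = ⊥ → y.lo = ⊥ := fun hx => le_bot_iff.mp (hx ▸ hlo)
    have hhi' : x.hi = ⊤ → y.hi = ⊤ := fun hx => top_le_iff.mp (hx ▸ hhi)
    simp only [rank]; split_ifs <;> simp_all

theorem rank_widen_lt_of_not_le {a b : Intv} (h : ¬ b.le a) : (widen a b).rank < a.rank := by
  match a, b with
  | .bot, .bot => exact absurd trivial h
  | .bot, .iv y => simp only [widen, rank]; split_ifs <;> omega
  | .iv x, .bot => exact absurd trivial h
  | .iv x, .iv y =>
    have hlo : ¬ x.lo ≤ y.lo → x.lo ≠ ⊥ := fun h' hx => h' (hx ▸ bot_le)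
    have hhi : ¬ y.hi ≤ x.hi → x.hi ≠ ⊤ := fun h' hx => h' (hx ▸ le_top)
    simp only [le, not_and_or] at h
    simp only [widen, rank]
    split_ifs <;> simp_all

theorem sup_le_widen (a b : Intv) : (sup a b).le (widen a b) := by
  match a, b with
  | .bot, .bot => trivial
  | .bot, .iv _ | .iv _, .bot => exact ⟨le_rfl, le_rfl⟩
  | .iv x, .iv y =>
    refine ⟨?_, ?_⟩ <;> dsimp only [sup, widen] <;> split_ifs with h
    · exact le_min le_rfl h
    · exact bot_le
    · exact max_le le_rfl h
    · exact le_top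

theorem widen_eq_left_of_le {a b : Intv} (h : b.le a) : widen a b = a := by
  match a, b, h with
  | .bot, .bot, _ => rfl
  | .iv _, .bot, _ => rfl
  | .iv x, .iv y, ⟨hlo, hhi⟩ => simp [widen, hlo, hhi]

theorem eventually_le_of_widen_le {a b : ℕ → Intv} (ha : ∀ i, (a i).le (a (i + 1)))
    (hw : ∀ i, (widen (a i) (b i)).le (a (i + 1))) : ∃ i₀, ∀ i, i₀ ≤ i → (b i).le (a i) := by
  obtain ⟨n, hn⟩ := WellFoundedLT.antitone_chain_condition
    (antitone_nat_of_succ_le fun i => (ha i).rank_le : Antitone fun i => (a i).rank)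
  refine ⟨n, fun i hi => ?_⟩
  by_contra h
  have hdrop : (a (i + 1)).rank < (a i).rank := (hw i).rank_le.trans_lt (rank_widen_lt_of_not_le h)
  rw [← hn i hi, ← hn (i + 1) (by omega)] at hdrop
  exact lt_irrefl _ hdrop

end Intv

/-- The classic interval widening is a *strong* widening operator:
(i) it subsumes the join, (ii) `a ∇ b = a` whenever `b ⊑ a`, and (iii) for every increasing
sequence `a₁ ⊑ a₂ ⊑ …` of intervals and every sequence `bᵢ` with `aᵢ ∇ bᵢ ⊑ a_{i+1}` for
all `i ≥ 1`, there is `i₀ ≥ 1` with `bᵢ ⊑ aᵢ` for all `i ≥ i₀`. -/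
theorem interval_widen_is_strong_widening :
    (∀ a b : Intv, (Intv.sup a b).le (Intv.widen a b)) ∧
    (∀ a b : Intv, b.le a → Intv.widen a b = a) ∧
    (∀ (a b : ℕ → Intv), (∀ i, 1 ≤ i → (a i).le (a (i + 1))) →
      (∀ i, 1 ≤ i → (Intv.widen (a i) (b i)).le (a (i + 1))) →
      ∃ i₀, 1 ≤ i₀ ∧ ∀ i, i₀ ≤ i → (b i).le (a i)) := by
  refine ⟨Intv.sup_le_widen, fun _ _ => Intv.widen_eq_left_of_le, fun a b ha hw => ?_⟩
  obtain ⟨i₀, h⟩ := Intv.eventually_le_of_widen_le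
    (a := fun i => a (i + 1)) (b := fun i => b (i + 1))
    (fun i => ha (i + 1) (by omega)) (fun i => hw (i + 1) (by omega))
  refine ⟨i₀ + 1, by omega, fun i hi => ?_⟩
  obtain ⟨j, rfl⟩ : ∃ j, i = j + 1 := ⟨i - 1, by omega⟩
  exact h j (by omega)
end

section
/- Let D be a bounded lattice and ∇ : D × D → D an operator satisfying a ⊔ b ⊑ a ∇ b for all a, b ∈ D and a ∇ b = a whenever b ⊑ a. If there exists a finite set T ⊆ D such that a ∇ b ∈ T whenever b ⋢ a (a threshold widening with finitely many thresholds), then ∇ is a strong widening operator. -/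
/-- A threshold widening with finitely many thresholds is a strong widening
operator: if `W` subsumes the join, returns its left argument on subsumed right arguments,
and there is a finite set `T` of thresholds with `W a b ∈ T` whenever `¬ b ≤ a`, then `W`
is a strong widening operator. -/
theorem threshold_widening_is_strong {D : Type*} [Lattice D] [BoundedOrder D]
    (W : D → D → D)
    (hjoin : ∀ a b, a ⊔ b ≤ W a b)
    (hsub : ∀ a b, b ≤ a → W a b = a)
    (T : Set D) (hTfin : T.Finite)
    (hT : ∀ a b, ¬ b ≤ a → W a b ∈ T) :
    IsStrongWidening W := by
  classical
  refine ⟨hjoin, hsub, ?_⟩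
  intro a b hmono hstep
  by_contra h
  push_neg at h
  -- every i₀ ≥ 1 has a bad index i ≥ i₀
  have hbad : ∀ i₀, 1 ≤ i₀ → ∃ i, i₀ ≤ i ∧ ¬ b i ≤ a i := by
    intro i₀ hi₀
    obtain ⟨i, hi, hb⟩ := h i₀ hi₀
    exact ⟨i, hi, hb⟩
  -- monotonicity on [1, ∞)
  have hmono' : ∀ i j, 1 ≤ i → i ≤ j → a i ≤ a j := by
    intro i j hi hij
    induction j with
    | zero => omega
    | succ k ih =>
      rcases Nat.lt_or_ge i (k+1) with hlt | hge
      · exact le_trans (ih (by omega)) (hmono k (by omega))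
      · have : i = k + 1 := by omega
        subst this; exact le_rfl
  set Tf := hTfin.toFinset with hTf
  set S : ℕ → Finset D := fun i => Tf.filter (· ≤ a i) with hS
  have hSmono : ∀ i j, 1 ≤ i → i ≤ j → S i ⊆ S j := by
    intro i j hi hij t ht
    simp only [hS, Finset.mem_filter] at ht ⊢
    exact ⟨ht.1, le_trans ht.2 (hmono' i j hi hij)⟩
  -- at a bad index, S strictly grows
  have hgrow : ∀ i, 1 ≤ i → ¬ b i ≤ a i → (S i).card < (S (i+1)).card := by
    intro i hi hbi
    have ht : W (a i) (b i) ∈ Tf := by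
      rw [hTf, Set.Finite.mem_toFinset]; exact hT _ _ hbi
    have hmem : W (a i) (b i) ∈ S (i+1) := by
      simp only [hS, Finset.mem_filter]
      exact ⟨ht, hstep i hi⟩
    have hnmem : W (a i) (b i) ∉ S i := by
      simp only [hS, Finset.mem_filter]
      rintro ⟨-, hle⟩
      exact hbi (le_trans (le_trans le_sup_right (hjoin _ _)) hle)
    exact Finset.card_lt_card
      (Finset.ssubset_iff_of_subset (hSmono i (i+1) hi (by omega)) |>.2
        ⟨_, hmem, hnmem⟩)
  -- get arbitrarily large cards
  have key : ∀ n : ℕ, ∃ i, 1 ≤ i ∧ n ≤ (S i).card := by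
    intro n
    induction n with
    | zero => exact ⟨1, le_rfl, Nat.zero_le _⟩
    | succ n ih =>
      obtain ⟨i, hi, hcard⟩ := ih
      obtain ⟨j, hij, hbj⟩ := hbad i hi
      refine ⟨j + 1, by omega, ?_⟩
      have h1 := Finset.card_le_card (hSmono i j hi hij)
      have h2 := hgrow j (by omega) hbj
      omega
  obtain ⟨i, -, hcard⟩ := key (Tf.card + 1)
  have : (S i).card ≤ Tf.card := Finset.card_le_card (Finset.filter_subset _ _)
  omega
end

section
/- Consider the bounded lattice D = (ℕ ∪ {∞}) × {0,1,2} with the lexicographic order (each component carrying its usual linear order); since this order is total, join is the maximum. The operator ∇ defined by (a,b) ∇ (c,d) = (∞, 2) if max(b,d) = 2, and (a,b) ∇ (c,d) = (max(a,c), max(b,d) + 1) otherwise, is a widening operator on D, but it is not a strong widening operator. -/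
/-- The operator `(a,b) ∇ (c,d) = (∞, 2)` if `max b d = 2` and
`(a,b) ∇ (c,d) = (max a c, max b d + 1)` otherwise, on the lexicographic product
`(ℕ ∪ {∞}) × {0,1,2}`. -/
noncomputable def gasWiden : Lex (ℕ∞ × Fin 3) → Lex (ℕ∞ × Fin 3) → Lex (ℕ∞ × Fin 3) :=
  fun p q =>
    if max (ofLex p).2 (ofLex q).2 = (2 : Fin 3) then toLex ((⊤ : ℕ∞), (2 : Fin 3))
    else toLex (max (ofLex p).1 (ofLex q).1, max (ofLex p).2 (ofLex q).2 + 1)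

/-! Each application of `gasWiden` either jumps to the top `(∞, 2)` or strictly raises the
second coordinate, which lives in `{0, 1, 2}`. Hence every widening sequence has second
coordinate `2` from index `2` on and is `⊤` from index `3` on. Strength already fails at
`b ⊑ a → a ∇ b = a`: `(0, 0) ∇ (0, 0) = (0, 1)`. -/

theorem IsStrongWidening.apply_self {D : Type*} [Lattice D] {W : D → D → D}
    (hW : IsStrongWidening W) (a : D) : W a a = a :=
  hW.2.1 a a le_rfl

theorem Fin.lt_max_add_one {n : ℕ} {a b : Fin (n + 1)} (h : max a b ≠ Fin.last n) :
    a < max a b + 1 :=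
  (le_max_left a b).trans_lt (Fin.lt_add_one_iff.2 ((Fin.le_last _).lt_of_ne h))

theorem gasWiden_comm (p q : Lex (ℕ∞ × Fin 3)) : gasWiden p q = gasWiden q p := by
  simp only [gasWiden, max_comm (ofLex p).1, max_comm (ofLex p).2]

theorem gasWiden_of_snd_eq_two {p : Lex (ℕ∞ × Fin 3)} (hp : (ofLex p).2 = 2)
    (q : Lex (ℕ∞ × Fin 3)) : gasWiden p q = ⊤ := by
  have : max (2 : Fin 3) (ofLex q).2 = 2 := max_eq_left (Fin.le_last _)
  simp only [gasWiden, hp, this, if_true]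
  rfl

theorem snd_gasWiden_eq_two_or_lt (p q : Lex (ℕ∞ × Fin 3)) :
    (ofLex (gasWiden p q)).2 = 2 ∨ (ofLex p).2 < (ofLex (gasWiden p q)).2 := by
  unfold gasWiden
  split_ifs with h
  · exact Or.inl rfl
  · exact Or.inr (Fin.lt_max_add_one h)

theorem le_gasWiden_left (p q : Lex (ℕ∞ × Fin 3)) : p ≤ gasWiden p q := by
  unfold gasWiden
  split_ifs with h
  · exact le_top
  · rw [← toLex_ofLex p, Prod.Lex.toLex_le_toLex]
    rcases (le_max_left (ofLex p).1 (ofLex q).1).lt_or_eq with hlt | heq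
    · exact Or.inl hlt
    · exact Or.inr ⟨heq, (Fin.lt_max_add_one h).le⟩

theorem sup_le_gasWiden (p q : Lex (ℕ∞ × Fin 3)) : p ⊔ q ≤ gasWiden p q :=
  sup_le (le_gasWiden_left p q) (gasWiden_comm p q ▸ le_gasWiden_left q p)

section WideningSequence

variable {a b : ℕ → Lex (ℕ∞ × Fin 3)} (ha : ∀ i, a (i + 1) = gasWiden (a i) (b (i + 1)))
include ha

theorem min_le_snd_of_gasWiden_seq (i : ℕ) : min i 2 ≤ ((ofLex (a i)).2 : ℕ) := by
  induction i with
  | zero => simp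
  | succ i ih =>
    rcases snd_gasWiden_eq_two_or_lt (a i) (b (i + 1)) with h | h <;> rw [← ha] at h
    · simp [h]
    · have : ((ofLex (a i)).2 : ℕ) < (ofLex (a (i + 1))).2 := h
      omega

theorem eq_top_of_gasWiden_seq {i : ℕ} (hi : 3 ≤ i) : a i = ⊤ := by
  obtain ⟨k, rfl⟩ : ∃ k, i = k + 3 := ⟨i - 3, by omega⟩
  have h2 : (ofLex (a (k + 2))).2 = 2 := by
    have := min_le_snd_of_gasWiden_seq ha (k + 2)
    rw [min_eq_right (by omega)] at this
    exact Fin.ext (le_antisymm (Nat.le_of_lt_succ (Fin.isLt _)) this)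
  rw [ha]
  exact gasWiden_of_snd_eq_two h2 _

end WideningSequence

/-- On the bounded lattice `(ℕ ∪ {∞}) × {0,1,2}` with the lexicographic
order (a linear order, so join is max), the operator `gasWiden` is a widening operator, but
it is not a strong widening operator. -/
theorem gasWiden_widening_not_strong :
    IsWidening gasWiden ∧ ¬ IsStrongWidening gasWiden := by
  refine ⟨⟨sup_le_gasWiden, fun a b ha => ⟨3, fun i hi => ?_⟩⟩, fun hW => ?_⟩
  · rw [eq_top_of_gasWiden_seq ha hi, eq_top_of_gasWiden_seq ha le_rfl]
  · have h := snd_gasWiden_eq_two_or_lt (toLex ((0 : ℕ∞), (0 : Fin 3))) (toLex (0, 0))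
    rw [hW.apply_self] at h
    simp at h
end

section
/- Termination of the reluctant per-origin update rule: let D be a bounded lattice with a strong widening operator ∇ and a narrowing operator △, let L and G be finite sets of locals and globals respectively, and fix a gas bound N ∈ ℕ. Maintain a state cmap : G → L → D × {W, N} × ℕ, initially (⊥, W, 0) everywhere. A call with origin x ∈ L, contributions C ⊆ G × D (each global at most once), and current map ρ : G → D processes each (g,b) ∈ C as follows, where (a, p, n) = cmap g x: if a = b, do nothing for g; otherwise, if b ⋢ a, set cmap g x = ((if b ⊑ ρ g then a ⊔ b else a ∇ b), W, n); otherwise, if p = N, set cmap g x = (a △ b, N, n); otherwise, if n ≥ N, do nothing for g; otherwise set cmap g x = (a △ b, N, n+1); in the first three mutating cases, letting d be the join over l ∈ L of the first components of cmap g l (after the update), emit the update (g,d) if d ≠ ρ g. Then for every infinite sequence of calls (xᵢ, Cᵢ), i ≥ 0, with ρᵢ₊₁ = ρᵢ ⊕ Uᵢ where Uᵢ is the set of updates emitted at call i, there exists j such that Uᵢ = ∅ for all i > j; i.e., the number of updates to globals is finite. -/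
attribute [local instance] Classical.propDecidable

/-- `N` is a narrowing operator: `a ⊓ b ≤ N a b ≤ a`, and every narrowing sequence
`aᵢ = a_{i-1} △ bᵢ` is ultimately stable. -/
def IsNarrowing {D : Type*} [Lattice D] (N : D → D → D) : Prop :=
  (∀ a b, a ⊓ b ≤ N a b ∧ N a b ≤ a) ∧
  ∀ (a b : ℕ → D), (∀ i, a (i + 1) = N (a i) (b (i + 1))) → UltimatelyStable a

/-- The widening (`W`) / narrowing (`N`) phase recorded per pair of a global and a local. -/
inductive Phase : Type where
  | W : Phase
  | N : Phase

/-- Processing of a single contribution `b` to a global with current value `ρg`, where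
`e = (a, p, n)` is the recorded entry (value, phase, consumed W/N gas) of the contributing
local for this global, with gas bound `gas`:
* if `a = b`, do nothing;
* otherwise, if `b ⋢ a`, record `(if b ⊑ ρ g then a ⊔ b else a ∇ b, W, n)` (reluctant widening);
* otherwise, if the phase is `N`, record `(a △ b, N, n)`;
* otherwise, if `n ≥ gas`, do nothing (gas exhausted);
* otherwise record `(a △ b, N, n + 1)` (switch phase, consume gas). -/
noncomputable def procOne {D : Type*} [Lattice D] (Wop Nop : D → D → D) (gas : ℕ)
    (ρg : D) (e : D × Phase × ℕ) (b : D) : D × Phase × ℕ :=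
  if e.1 = b then e
  else if ¬ b ≤ e.1 then
    ((if b ≤ ρg then e.1 ⊔ b else Wop e.1 b), Phase.W, e.2.2)
  else if e.2.1 = Phase.N then (Nop e.1 b, Phase.N, e.2.2)
  else if gas ≤ e.2.2 then e
  else (Nop e.1 b, Phase.N, e.2.2 + 1)

/-- The entry of `(g, x)` is mutated by contribution `b` (the first three mutating cases). -/
def Mutates {D : Type*} [Lattice D] (gas : ℕ) (e : D × Phase × ℕ) (b : D) : Prop :=
  e.1 ≠ b ∧ (¬ b ≤ e.1 ∨ e.2.1 = Phase.N ∨ e.2.2 < gas)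

/-- The new `cmap` after a call with origin `x` and contributions `Cs` (at most one
contribution per global, encoded as `Cs : G → Option D`). -/
noncomputable def stepCmap {D L G : Type*} [Lattice D] (Wop Nop : D → D → D) (gas : ℕ)
    (ρ : G → D) (x : L) (Cs : G → Option D)
    (cm : G → L → D × Phase × ℕ) : G → L → D × Phase × ℕ :=
  fun g l =>
    match Cs g with
    | none => cm g l
    | some b => if l = x then procOne Wop Nop gas (ρ g) (cm g l) b else cm g l

/-- The updates emitted by a call: for each contribution `(g, b)` whose processing mutates
the entry of `(g, x)`, letting `d` be the join over `l ∈ L` of the first components of the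
updated `cmap g l`, the update `(g, d)` is emitted provided `d ≠ ρ g`. -/
noncomputable def emitted {D L G : Type*} [Lattice D] [OrderBot D] [Fintype L]
    (Wop Nop : D → D → D) (gas : ℕ) (ρ : G → D) (x : L) (Cs : G → Option D)
    (cm : G → L → D × Phase × ℕ) : G → Option D :=
  fun g =>
    match Cs g with
    | none => none
    | some b =>
      if Mutates gas (cm g x) b then
        let d := Finset.univ.sup fun l => (stepCmap Wop Nop gas ρ x Cs cm g l).1
        if d ≠ ρ g then some d else none
      else none

/-- The run of the update rule on a sequence of calls `(x i, Cs i)`, starting from the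
everywhere-`(⊥, W, 0)` `cmap` and an initial `ρ₀`; at each call, `ρ` is updated by the
emitted updates (`ρ_{i+1} = ρ_i ⊕ U_i`). -/
noncomputable def runState {D L G : Type*} [Lattice D] [OrderBot D] [Fintype L]
    (Wop Nop : D → D → D) (gas : ℕ) (x : ℕ → L) (Cs : ℕ → G → Option D) (ρ0 : G → D) :
    ℕ → (G → L → D × Phase × ℕ) × (G → D)
  | 0 => (fun _ _ => (⊥, Phase.W, 0), ρ0)
  | i + 1 =>
    let s := runState Wop Nop gas x Cs ρ0 i
    (stepCmap Wop Nop gas s.2 (x i) (Cs i) s.1,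
     fun g => (emitted Wop Nop gas s.2 (x i) (Cs i) s.1 g).getD (s.2 g))

/-!
Fix a global `g` and a local `l`. Each call changes the entry of `(g, l)` by `procOne`, which
never lowers the gas counter `n ≤ gas` and switches the phase from `W` to `N` only by spending
gas, so the phase is eventually constant. In a final `N` phase the values form a narrowing
sequence, hence stabilise. In a final `W` phase the values increase, and strong widening rules
out infinitely many genuine widenings (contributions `b ⋢ ρ g`), so eventually each change joins
in a contribution below `ρ g`.

Every entry of `g` always lies below `ρ g`, since an emitted update resets `ρ g` to the join `s`
of those entries. So eventually `s` increases while staying below `ρ g`, and `ρ g` changes only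
when an update is emitted, being reset to `s`. After such an update at call `i₀`, every later
call `i` has `ρᵢ ≤ ρ_{i₀+1} = s_{i₀+1} ≤ s_{i+1} ≤ ρᵢ`, so nothing more is emitted.
-/

open Filter

theorem exists_forall_ge_eq_of_monotone_of_le {f : ℕ → ℕ} {B : ℕ} (hf : Monotone f)
    (hB : ∀ i, f i ≤ B) : ∃ T, ∀ i, T ≤ i → f i = f T := by
  obtain ⟨T, hT⟩ := WellFoundedGT.monotone_chain_condition
    (⟨fun i => (⟨f i, hB i⟩ : Set.Iic B), fun _ _ h => hf h⟩ : ℕ →o Set.Iic B)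
  exact ⟨T, fun i hi => congrArg Subtype.val (hT i hi).symm⟩

theorem eventually_not_of_update_to_monotone_le {α : Type*} [PartialOrder α] {s ρ : ℕ → α}
    {P : ℕ → Prop} (hs : ∀ᶠ i in atTop, s i ≤ s (i + 1) ∧ s (i + 1) ≤ ρ i)
    (hkeep : ∀ i, ¬ P i → ρ (i + 1) = ρ i)
    (hupdate : ∀ i, P i → ρ (i + 1) = s (i + 1) ∧ s (i + 1) ≠ ρ i) :
    ∀ᶠ i in atTop, ¬ P i := by
  obtain ⟨T, hT⟩ := eventually_atTop.1 hs
  have hs_mono : MonotoneOn s (Set.Ici T) :=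
    monotoneOn_nat_Ici_of_le_succ fun i hi => (hT i hi).1
  have hρ_anti : AntitoneOn ρ (Set.Ici T) := antitoneOn_nat_Ici_of_succ_le fun i hi => by
    by_cases hPi : P i
    · exact (hupdate i hPi).1 ▸ (hT i hi).2
    · exact (hkeep i hPi).le
  by_cases hP : ∃ i₀, T ≤ i₀ ∧ P i₀
  · obtain ⟨i₀, hi₀, hPi₀⟩ := hP
    refine eventually_atTop.2 ⟨i₀ + 1, fun i hi hPi =>
      (hupdate i hPi).2 (le_antisymm (hT i (by omega)).2 ?_)⟩
    calc ρ i ≤ ρ (i₀ + 1) := hρ_anti (Set.mem_Ici.2 (by omega)) (Set.mem_Ici.2 (by omega)) hi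
      _ = s (i₀ + 1) := (hupdate i₀ hPi₀).1
      _ ≤ s (i + 1) := hs_mono (Set.mem_Ici.2 (by omega)) (Set.mem_Ici.2 (by omega)) (by omega)
  · push Not at hP
    exact eventually_atTop.2 ⟨T, hP⟩

section Operators

variable {D : Type*} [Lattice D] {Wop Nop : D → D → D} {a b : ℕ → D}

theorem IsNarrowing.eventually_succ_eq (hN : IsNarrowing Nop)
    (h : ∀ᶠ i in atTop, a (i + 1) = a i ∨ a (i + 1) = Nop (a i) (b i)) :
    ∀ᶠ i in atTop, a (i + 1) = a i := by
  have hNop_self : ∀ d, Nop d d = d := fun d =>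
    (hN.1 d d).2.antisymm (by simpa using (hN.1 d d).1)
  obtain ⟨T, hT⟩ := eventually_atTop.1 h
  let c k := if a (k + T) = Nop (a (k - 1 + T)) (b (k - 1 + T)) then b (k - 1 + T)
    else a (k - 1 + T)
  obtain ⟨k, hk⟩ := hN.2 (fun k => a (k + T)) c fun k => by
    simp only [c, Nat.add_sub_cancel, Nat.add_right_comm k 1 T]
    split_ifs with hnarrow
    · exact hnarrow
    · rw [(hT (k + T) (Nat.le_add_left T k)).resolve_right hnarrow, hNop_self]
  refine eventually_atTop.2 ⟨k + T, fun i hi => ?_⟩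
  have h₁ := hk (i + 1 - T) (by omega)
  have h₂ := hk (i - T) (by omega)
  simp only [show i + 1 - T + T = i + 1 by omega, show i - T + T = i by omega] at h₁ h₂
  rw [h₁, h₂]

theorem IsStrongWidening.eventually_of_widen_or (hW : IsStrongWidening Wop) {Q : ℕ → Prop}
    (hQ : ∀ i, Q i → a i ≤ a (i + 1))
    (h : ∀ᶠ i in atTop, (¬ b i ≤ a i ∧ a (i + 1) = Wop (a i) (b i)) ∨ Q i) :
    ∀ᶠ i in atTop, Q i := by
  obtain ⟨T, hT⟩ := eventually_atTop.1 h
  -- `Q`-steps are fed to the widening as `a i ∇ a i = a i`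
  let c i := if Q i then a i else b i
  have hc : ∀ i, T ≤ i → Wop (a i) (c i) ≤ a (i + 1) := fun i hi => by
    by_cases hQi : Q i
    · simpa [c, hQi, hW.2.1 (a i) (a i) le_rfl] using hQ i hQi
    · simp only [c, hQi, if_false]
      exact ((hT i hi).resolve_right hQi).2.ge
  have hc' : ∀ k, Wop (a (k + T)) (c (k + T)) ≤ a (k + 1 + T) := fun k => by
    simpa [Nat.add_right_comm] using hc (k + T) (by omega)
  obtain ⟨k, -, hk⟩ := hW.2.2 (fun k => a (k + T)) (fun k => c (k + T))
    (fun k _ => le_sup_left.trans ((hW.1 _ _).trans (hc' k))) (fun k _ => hc' k)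
  refine eventually_atTop.2 ⟨k + T, fun i hi => ?_⟩
  by_contra hQi
  have hci := hk (i - T) (by omega)
  simp only [show i - T + T = i by omega, c, hQi, if_false] at hci
  exact ((hT i (by omega)).resolve_right hQi).1 hci

end Operators

-- Every `procOne` step raises `(n, p)` lexicographically, with `N < W`, or leaves it unchanged.
def phaseRank {D : Type*} : D × Phase × ℕ → ℕ
  | (_, Phase.N, n) => 2 * n
  | (_, Phase.W, n) => 2 * n + 1

theorem phaseRank_le {D : Type*} {gas : ℕ} {e : D × Phase × ℕ} (h : e.2.2 ≤ gas) :
    phaseRank e ≤ 2 * gas + 1 := by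
  obtain ⟨a, p, n⟩ := e
  cases p <;> simp only [phaseRank] at h ⊢ <;> omega

theorem phase_eq_of_phaseRank_eq {D : Type*} {e e' : D × Phase × ℕ}
    (h : phaseRank e = phaseRank e') : e.2.1 = e'.2.1 := by
  obtain ⟨a, p, n⟩ := e
  obtain ⟨a', p', n'⟩ := e'
  cases p <;> cases p' <;> simp only [phaseRank] at h ⊢ <;> omega

section ProcOne

variable {D : Type*} [Lattice D] {Wop Nop : D → D → D} {gas : ℕ} {r : D} {e : D × Phase × ℕ}
  {b : D}

theorem procOne_self : procOne Wop Nop gas r e e.1 = e := by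
  simp [procOne]

theorem procOne_of_not_mutates (h : ¬ Mutates gas e b) : procOne Wop Nop gas r e b = e := by
  unfold Mutates at h
  unfold procOne
  split_ifs <;> simp_all

theorem gas_procOne_le (h : e.2.2 ≤ gas) : (procOne Wop Nop gas r e b).2.2 ≤ gas := by
  unfold procOne
  split_ifs <;> simp_all

theorem phaseRank_le_procOne : phaseRank e ≤ phaseRank (procOne Wop Nop gas r e b) := by
  obtain ⟨a, p, n⟩ := e
  unfold procOne
  cases p <;> split_ifs <;> simp_all [phaseRank]

theorem procOne_fst_of_phase_N (h : (procOne Wop Nop gas r e b).2.1 = Phase.N) :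
    (procOne Wop Nop gas r e b).1 = e.1 ∨ (procOne Wop Nop gas r e b).1 = Nop e.1 b := by
  unfold procOne at h ⊢
  split_ifs at h ⊢ <;> simp_all

theorem procOne_fst_of_phase_W (h : (procOne Wop Nop gas r e b).2.1 = Phase.W) :
    (¬ b ≤ e.1 ∧ (procOne Wop Nop gas r e b).1 = Wop e.1 b) ∨
      (e.1 ≤ (procOne Wop Nop gas r e b).1 ∧ (procOne Wop Nop gas r e b).1 ≤ e.1 ⊔ r) := by
  unfold procOne at h ⊢
  split_ifs at h ⊢ <;> simp_all [le_sup_of_le_right]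

end ProcOne

section Trajectory

variable {D : Type*} [Lattice D] {Wop Nop : D → D → D} {gas : ℕ} {e : ℕ → D × Phase × ℕ}
  {r b : ℕ → D}

theorem eventually_phase_eq (hstep : ∀ i, e (i + 1) = procOne Wop Nop gas (r i) (e i) (b i))
    (h0 : (e 0).2.2 ≤ gas) : ∃ p, ∀ᶠ i in atTop, (e i).2.1 = p := by
  have hgas : ∀ i, (e i).2.2 ≤ gas := fun i => by
    induction i with
    | zero => exact h0
    | succ i ih => exact hstep i ▸ gas_procOne_le ih
  have hmono : Monotone fun i => phaseRank (e i) :=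
    monotone_nat_of_le_succ fun i => hstep i ▸ phaseRank_le_procOne
  obtain ⟨T, hT⟩ := exists_forall_ge_eq_of_monotone_of_le hmono fun i => phaseRank_le (hgas i)
  exact ⟨(e T).2.1, eventually_atTop.2 ⟨T, fun i hi => phase_eq_of_phaseRank_eq (hT i hi)⟩⟩

theorem eventually_fst_le_fst_succ_le_sup (hW : IsStrongWidening Wop) (hN : IsNarrowing Nop)
    (hstep : ∀ i, e (i + 1) = procOne Wop Nop gas (r i) (e i) (b i)) (h0 : (e 0).2.2 ≤ gas) :
    ∀ᶠ i in atTop, (e i).1 ≤ (e (i + 1)).1 ∧ (e (i + 1)).1 ≤ (e i).1 ⊔ r i := by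
  obtain ⟨p, hp⟩ := eventually_phase_eq hstep h0
  have hp' : ∀ᶠ i in atTop, (e (i + 1)).2.1 = p := (tendsto_add_atTop_nat 1).eventually hp
  cases p with
  | N =>
    have hstable := hN.eventually_succ_eq (a := fun i => (e i).1) (b := b) <|
      hp'.mono fun i hi => by rw [hstep] at hi ⊢; exact procOne_fst_of_phase_N hi
    filter_upwards [hstable] with i hi
    exact ⟨hi.ge, hi.le.trans le_sup_left⟩
  | W =>
    refine hW.eventually_of_widen_or (a := fun i => (e i).1) (b := b) (fun i h => h.1) ?_
    filter_upwards [hp'] with i hi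
    rw [hstep] at hi ⊢
    exact procOne_fst_of_phase_W hi

end Trajectory

section Step

variable {D L G : Type*} [Lattice D] {Wop Nop : D → D → D} {gas : ℕ} {ρ : G → D} {x : L}
  {Cs : G → Option D} {cm : G → L → D × Phase × ℕ} {g : G}

theorem exists_stepCmap_eq_procOne (l : L) :
    ∃ b, stepCmap Wop Nop gas ρ x Cs cm g l = procOne Wop Nop gas (ρ g) (cm g l) b := by
  unfold stepCmap
  rcases Cs g with _ | b
  · exact ⟨(cm g l).1, procOne_self.symm⟩
  · by_cases hl : l = x
    · exact ⟨b, by simp [hl]⟩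
    · exact ⟨(cm g l).1, by simp [hl, procOne_self]⟩

variable [OrderBot D] [Fintype L]

theorem emitted_eq_some {d : D} (h : emitted Wop Nop gas ρ x Cs cm g = some d) :
    d = Finset.univ.sup (fun l => (stepCmap Wop Nop gas ρ x Cs cm g l).1) ∧ d ≠ ρ g := by
  unfold emitted at h
  rcases hC : Cs g with _ | b
  · simp [hC] at h
  · simp only [hC] at h
    split_ifs at h with _ hne
    cases h
    exact ⟨rfl, hne⟩

theorem fst_stepCmap_le_getD_emitted (hcm : ∀ l, (cm g l).1 ≤ ρ g) (l : L) :
    (stepCmap Wop Nop gas ρ x Cs cm g l).1 ≤ (emitted Wop Nop gas ρ x Cs cm g).getD (ρ g) := by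
  have hle : (stepCmap Wop Nop gas ρ x Cs cm g l).1 ≤
      Finset.univ.sup fun l => (stepCmap Wop Nop gas ρ x Cs cm g l).1 :=
    Finset.le_sup (f := fun l => (stepCmap Wop Nop gas ρ x Cs cm g l).1) (Finset.mem_univ l)
  unfold emitted
  rcases hC : Cs g with _ | b
  · simpa [stepCmap, hC] using hcm l
  · dsimp only
    split_ifs with hmut hne
    · exact hle
    · exact hle.trans (not_not.1 hne).le
    · have hkeep : stepCmap Wop Nop gas ρ x Cs cm g l = cm g l := by
        by_cases hl : l = x
        · simp [stepCmap, hC, hl, procOne_of_not_mutates hmut]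
        · simp [stepCmap, hC, hl]
      simpa [hkeep] using hcm l

end Step

section Run

variable {D L G : Type*} [Lattice D] [OrderBot D] [Fintype L] {Wop Nop : D → D → D} {gas : ℕ}
  {x : ℕ → L} {Cs : ℕ → G → Option D} {ρ0 : G → D}

theorem fst_runState_le_snd (i : ℕ) (g : G) (l : L) :
    ((runState Wop Nop gas x Cs ρ0 i).1 g l).1 ≤ (runState Wop Nop gas x Cs ρ0 i).2 g := by
  induction i generalizing l with
  | zero => exact bot_le
  | succ i ih => exact fst_stepCmap_le_getD_emitted ih l

theorem eventually_fst_runState_le (hW : IsStrongWidening Wop) (hN : IsNarrowing Nop) (g : G)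
    (l : L) :
    ∀ᶠ i in atTop, ((runState Wop Nop gas x Cs ρ0 i).1 g l).1 ≤
        ((runState Wop Nop gas x Cs ρ0 (i + 1)).1 g l).1 ∧
      ((runState Wop Nop gas x Cs ρ0 (i + 1)).1 g l).1 ≤ (runState Wop Nop gas x Cs ρ0 i).2 g := by
  let e i := (runState Wop Nop gas x Cs ρ0 i).1 g l
  let r i := (runState Wop Nop gas x Cs ρ0 i).2 g
  have hstep : ∀ i, ∃ b, e (i + 1) = procOne Wop Nop gas (r i) (e i) b := fun i =>
    exists_stepCmap_eq_procOne l
  choose b hb using hstep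
  filter_upwards [eventually_fst_le_fst_succ_le_sup hW hN hb (Nat.zero_le gas)] with i hi
  rwa [sup_eq_right.2 (fst_runState_le_snd i g l)] at hi

theorem eventually_emitted_eq_none (hW : IsStrongWidening Wop) (hN : IsNarrowing Nop) (g : G) :
    ∀ᶠ i in atTop, emitted Wop Nop gas (runState Wop Nop gas x Cs ρ0 i).2 (x i) (Cs i)
      (runState Wop Nop gas x Cs ρ0 i).1 g = none := by
  let s i := Finset.univ.sup fun l => ((runState Wop Nop gas x Cs ρ0 i).1 g l).1
  have hs : ∀ᶠ i in atTop,
      s i ≤ s (i + 1) ∧ s (i + 1) ≤ (runState Wop Nop gas x Cs ρ0 i).2 g := by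
    filter_upwards [eventually_all.2 fun l : L => eventually_fst_runState_le hW hN g l] with i hi
    exact ⟨Finset.sup_mono_fun fun l _ => (hi l).1, Finset.sup_le fun l _ => (hi l).2⟩
  refine (eventually_not_of_update_to_monotone_le hs (fun i hi => ?_) (fun i hi => ?_)).mono
    fun i hi => not_not.1 hi
  · simp [runState, not_not.1 hi]
  · obtain ⟨d, hd⟩ := Option.ne_none_iff_exists'.1 hi
    obtain ⟨rfl, hne⟩ := emitted_eq_some hd
    exact ⟨by simp [runState, hd]; rfl, hne⟩

end Run

/-- Termination of the reluctant per-origin update rule: if `D` is a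
bounded lattice with a strong widening operator `Wop` and a narrowing operator `Nop`, `L`
and `G` are finite, and `gas` is any gas bound, then for every infinite sequence of calls
`(x i, Cs i)` the set of emitted updates is eventually empty: there is `j` such that for
all `i > j` no update is emitted at call `i`. -/
theorem reluctant_update_rule_terminates
    {D L G : Type*} [Lattice D] [BoundedOrder D] [Fintype L] [Fintype G]
    (Wop Nop : D → D → D)
    (hW : IsStrongWidening Wop) (hN : IsNarrowing Nop)
    (gas : ℕ) (x : ℕ → L) (Cs : ℕ → G → Option D) (ρ0 : G → D) :
    ∃ j, ∀ i, j < i → ∀ g,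
      emitted Wop Nop gas ((runState Wop Nop gas x Cs ρ0 i).2) (x i) (Cs i)
        ((runState Wop Nop gas x Cs ρ0 i).1) g = none := by
  obtain ⟨j, hj⟩ := eventually_atTop.1 <| eventually_all.2 fun g =>
    eventually_emitted_eq_none (gas := gas) (x := x) (Cs := Cs) (ρ0 := ρ0) hW hN g
  exact ⟨j, fun i hi => hj i hi.le⟩
end

section
/- Soundness of the localized widening/narrowing update rule: maintain maps cmap_j : G → O → D with cmap_0 g o = ⊥ for all g, o. At call j, for each (g,b) ∈ C_j with a = cmap_j g o_j: if a = b, leave the entry unchanged and emit no update for g; otherwise set cmap_{j+1} g o_j = (if b ⊑ a then a △ b else a ∇ b) (all other entries of cmap unchanged), and let U_j be the set of pairs (g,d) for those (g,b) ∈ C_j whose entry was mutated, where d is the join of the finitely many non-⊥ values cmap_{j+1} g o over o ∈ O and d ≠ ρ_j g; set ρ_{j+1} = ρ_j ⊕ U_j. Then, for any narrowing operator △ and any operator ∇ with a ⊔ b ⊑ a ∇ b for all a, b, the resulting run satisfies (R1): for every (g,b) ∈ C_j with b ⋢ ρ_j g there is a pair (g,d) ∈ U_j; and (R2): for every origin o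 with largest index i ≤ j such that o_i = o, every (g,d) ∈ U_j and every (g,d_i) ∈ C_i one has d_i ⊑ d. -/
attribute [local instance] Classical.propDecidable

/-- Soundness of the localized widening/narrowing update rule: maintain `cmap j : G → O → D`
with `cmap 0 g oo = ⊥`.  At call `j`, for each `(g, b) ∈ C j` with `a = cmap j g (o j)`:
if `a = b`, leave the entry unchanged and emit no update for `g`; otherwise set
`cmap (j+1) g (o j) = (if b ≤ a then a △ b else a ∇ b)` (other entries unchanged), and let
`U j` consist of the pairs `(g, d)` for the mutated `(g, b) ∈ C j` where `d` is the join
(least upper bound) of the finitely many non-`⊥` values `cmap (j+1) g oo` and `d ≠ ρ j g`;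
set `ρ (j+1) = ρ j ⊕ U j`.  Then, for any narrowing operator `△` and any operator `∇`
with `a ⊔ b ≤ a ∇ b`, the run satisfies (R1) and (R2). -/
theorem localized_widening_narrowing_sound
    {D G O : Type*} [Lattice D] [BoundedOrder D]
    (Wop Nop : D → D → D)
    -- ∇ subsumes the join
    (hW : ∀ a b, a ⊔ b ≤ Wop a b)
    -- △ is a narrowing operator
    (hN : ∀ a b : D, a ⊓ b ≤ Nop a b ∧ Nop a b ≤ a)
    (hNstable : ∀ (a b : ℕ → D), (∀ i, a (i + 1) = Nop (a i) (b (i + 1))) →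
      ∃ i₀, ∀ i, i₀ ≤ i → a i = a i₀)
    (o : ℕ → O) (C : ℕ → Set (G × D)) (U : ℕ → Set (G × D)) (ρ : ℕ → G → D)
    (cmap : ℕ → G → O → D)
    -- the contribution sets are finite and mention each global at most once
    (hCfin : ∀ j, (C j).Finite)
    (hCuniq : ∀ j g d d', (g, d) ∈ C j → (g, d') ∈ C j → d = d')
    -- cmap, initially ⊥, has finitely many non-⊥ entries per global
    (hcmap0 : ∀ g oo, cmap 0 g oo = ⊥)
    (hfin : ∀ j g, {oo | cmap j g oo ≠ ⊥}.Finite)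
    -- the localized widening/narrowing update of cmap
    (hmut : ∀ j g b, (g, b) ∈ C j → cmap j g (o j) ≠ b →
      cmap (j + 1) g (o j) =
        (if b ≤ cmap j g (o j) then Nop (cmap j g (o j)) b else Wop (cmap j g (o j)) b))
    (hsame : ∀ j g b, (g, b) ∈ C j → cmap j g (o j) = b →
      cmap (j + 1) g (o j) = cmap j g (o j))
    (hother : ∀ j g oo, (oo ≠ o j ∨ ∀ b, (g, b) ∉ C j) →
      cmap (j + 1) g oo = cmap j g oo)
    -- the emitted updates: the join of the recorded contributions, if mutated and changed
    (hU : ∀ j g d, (g, d) ∈ U j ↔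
      ∃ b, (g, b) ∈ C j ∧ cmap j g (o j) ≠ b ∧
        IsLUB (Set.range fun oo => cmap (j + 1) g oo) d ∧ d ≠ ρ j g)
    -- ρ_{j+1} = ρ_j ⊕ U_j
    (hρupd : ∀ j g d, (g, d) ∈ U j → ρ (j + 1) g = d)
    (hρsame : ∀ j g, (∀ d, (g, d) ∉ U j) → ρ (j + 1) g = ρ j g) :
    -- (R1)
    (∀ j g b, (g, b) ∈ C j → ¬ b ≤ ρ j g → ∃ d, (g, d) ∈ U j) ∧
    -- (R2)
    (∀ j (oo : O) i, i ≤ j → o i = oo →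
      (∀ i', i < i' → i' ≤ j → o i' ≠ oo) →
      ∀ g d dᵢ, (g, d) ∈ U j → (g, dᵢ) ∈ C i → dᵢ ≤ d) := by

  -- value after step dominates the contribution
  have hstep : ∀ j g b, (g, b) ∈ C j → b ≤ cmap (j + 1) g (o j) := by
    intro j g b hb
    by_cases h : cmap j g (o j) = b
    · rw [hsame j g b hb h, h]
    · rw [hmut j g b hb h]
      by_cases hle : b ≤ cmap j g (o j)
      · simp only [if_pos hle]
        calc b = cmap j g (o j) ⊓ b := (inf_eq_right.mpr hle).symm
          _ ≤ Nop (cmap j g (o j)) b := (hN _ _).1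
      · simp only [if_neg hle]
        exact le_trans le_sup_right (hW _ _)
  -- the LUB of the (finitely many distinct) values always exists
  have hlub : ∀ j g, ∃ d, IsLUB (Set.range fun oo => cmap j g oo) d := by
    intro j g
    have hsub : Set.range (fun oo => cmap j g oo) ⊆
        insert ⊥ ((fun oo => cmap j g oo) '' {oo | cmap j g oo ≠ ⊥}) := by
      rintro x ⟨oo, rfl⟩
      by_cases h : cmap j g oo = ⊥
      · exact Or.inl h
      · exact Or.inr ⟨oo, h, rfl⟩
    have hfin' : (Set.range fun oo => cmap j g oo).Finite :=
      Set.Finite.subset (((hfin j g).image _).insert ⊥) hsub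
    refine ⟨hfin'.toFinset.sup id, ?_, ?_⟩
    · intro x hx
      exact Finset.le_sup (f := id) (hfin'.mem_toFinset.mpr hx)
    · intro x hx
      exact Finset.sup_le fun y hy => hx (hfin'.mem_toFinset.mp hy)
  -- invariant: ρ j g is an upper bound of the entries of cmap j g
  have hinv : ∀ j g oo, cmap j g oo ≤ ρ j g := by
    intro j
    induction j with
    | zero => intro g oo; rw [hcmap0]; exact bot_le
    | succ j ih =>
      intro g oo
      by_cases hup : ∃ d, (g, d) ∈ U j
      · obtain ⟨d, hd⟩ := hup
        rw [hρupd j g d hd]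
        obtain ⟨b, -, -, hl, -⟩ := (hU j g d).1 hd
        exact hl.1 ⟨oo, rfl⟩
      · push_neg at hup
        rw [hρsame j g hup]
        by_cases hm : o j = oo ∧ ∃ b, (g, b) ∈ C j ∧ cmap j g (o j) ≠ b
        · obtain ⟨rfl, b, hb, hne⟩ := hm
          obtain ⟨d, hd⟩ := hlub (j + 1) g
          have hdρ : d = ρ j g := by
            by_contra hdd
            exact hup d ((hU j g d).2 ⟨b, hb, hne, hd, hdd⟩)
          calc cmap (j + 1) g (o j) ≤ d := hd.1 ⟨o j, rfl⟩
            _ = ρ j g := hdρ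
        · have heq : cmap (j + 1) g oo = cmap j g oo := by
            push_neg at hm
            by_cases ho : oo = o j
            · subst ho
              by_cases hc : ∃ b, (g, b) ∈ C j
              · obtain ⟨b, hb⟩ := hc
                exact hsame j g b hb (hm rfl b hb)
              · push_neg at hc
                exact hother j g (o j) (Or.inr hc)
            · exact hother j g oo (Or.inl ho)
          rw [heq]; exact ih g oo
  constructor
  · -- (R1)
    intro j g b hb hnle
    have hne : cmap j g (o j) ≠ b := fun h => hnle (h ▸ hinv j g (o j))
    obtain ⟨d, hd⟩ := hlub (j + 1) g
    have hdne : d ≠ ρ j g := by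
      intro h
      exact hnle (h ▸ le_trans (hstep j g b hb) (hd.1 ⟨o j, rfl⟩))
    exact ⟨d, (hU j g d).2 ⟨b, hb, hne, hd, hdne⟩⟩
  · -- (R2)
    intro j oo i hij hoi hno g d dᵢ hdU hdC
    obtain ⟨b, -, -, hd, -⟩ := (hU j g d).1 hdU
    have chain : ∀ k, i + 1 ≤ k → k ≤ j + 1 → dᵢ ≤ cmap k g oo := by
      intro k
      induction k with
      | zero => intro h; omega
      | succ k ih =>
        intro h1 h2
        rcases Nat.lt_or_ge i k with hik | hik
        · have hok : o k ≠ oo := hno k hik (by omega)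
          rw [hother k g oo (Or.inl fun h => hok h.symm)]
          exact ih hik (by omega)
        · have hki : k = i := by omega
          subst hki
          exact hoi ▸ hstep k g dᵢ hdC
    exact le_trans (chain (j + 1) (by omega) le_rfl) (hd.1 ⟨oo, rfl⟩)
end
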